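/- arXiv:1703.01658 — 2 statements merged into one kernel-verified Lean document; each statement's English description precedes it below -/
import Mathlib

section
/- Let a < b be real numbers, let n ≥ 1, and let X_1, …, X_n be i.i.d. random variables with the uniform distribution on [a,b]. Then the expected range satisfies E[max_{1≤i≤n} X_i − min_{1≤i≤n} X_i] = ((n−1)/(n+1))·(b−a). Formally, the integral of the function x ↦ (⨆_{i} x_i) − (⨅_{i} x_i) over [a,b]^n with respect to the n-fold product of the uniform measure on [a,b] equals ((n−1)/(n+1))·(b−a). -/
/-!
The maximum `M` of `n` i.i.d. uniform variables on `[a, b]` satisfies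
`P(M > a + t) = 1 - (t / (b - a))ⁿ` for `0 ≤ t ≤ b - a`, so the layer-cake formula gives
`E[M - a] = n / (n + 1) * (b - a)`; by the same computation with `P(m < b - t)` for the minimum `m`,
`E[b - m]` has the same value. The expected range is `E[M - a] + E[b - m] - (b - a)`.
-/

open MeasureTheory Set

noncomputable def uniformIcc (a b : ℝ) : Measure ℝ :=
  (ENNReal.ofReal (b - a))⁻¹ • volume.restrict (Icc a b)

namespace uniformIcc

variable {a b : ℝ}

lemma isProbabilityMeasure (hab : a < b) : IsProbabilityMeasure (uniformIcc a b) := by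
  constructor
  rw [uniformIcc, Measure.smul_apply, Measure.restrict_apply .univ, univ_inter, Real.volume_Icc,
    smul_eq_mul, ENNReal.inv_mul_cancel (by simpa using hab) ENNReal.ofReal_ne_top]

instance : IsFiniteMeasure (uniformIcc a b) := by
  constructor
  rw [uniformIcc, Measure.smul_apply, Measure.restrict_apply .univ, univ_inter, Real.volume_Icc,
    smul_eq_mul]
  exact (ENNReal.inv_mul_le_one _).trans_lt ENNReal.one_lt_top

lemma ae_mem_Icc : ∀ᵐ x ∂uniformIcc a b, x ∈ Icc a b :=
  Measure.ae_smul_measure (ae_restrict_mem measurableSet_Icc) _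

lemma real_apply (hab : a ≤ b) {s : Set ℝ} (hs : MeasurableSet s) :
    (uniformIcc a b).real s = volume.real (s ∩ Icc a b) / (b - a) := by
  rw [measureReal_def, uniformIcc, Measure.smul_apply, Measure.restrict_apply hs, smul_eq_mul,
    ENNReal.toReal_mul, ENNReal.toReal_inv, ENNReal.toReal_ofReal (sub_nonneg.2 hab),
    measureReal_def, inv_mul_eq_div]

lemma real_Iic (hab : a ≤ b) {x : ℝ} (hx : a ≤ x) :
    (uniformIcc a b).real (Iic x) = (min x b - a) / (b - a) := by
  have : Iic x ∩ Icc a b = Icc a (min x b) := by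
    ext; simp only [mem_inter_iff, mem_Iic, mem_Icc, le_min_iff]; tauto
  rw [real_apply hab measurableSet_Iic, this, Real.volume_real_Icc_of_le (le_min hx hab)]

lemma real_Ici (hab : a ≤ b) {x : ℝ} (hx : x ≤ b) :
    (uniformIcc a b).real (Ici x) = (b - max x a) / (b - a) := by
  have : Ici x ∩ Icc a b = Icc (max x a) b := by
    ext; simp only [mem_inter_iff, mem_Ici, mem_Icc, max_le_iff]; tauto
  rw [real_apply hab measurableSet_Ici, this, Real.volume_real_Icc_of_le (max_le hx hab)]

end uniformIcc

section OrderStatistics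

variable {ι : Type*} [Fintype ι] [Nonempty ι] (μ : Measure ℝ) [IsProbabilityMeasure μ]

lemma real_pi_lt_iSup (t : ℝ) :
    (Measure.pi fun _ : ι => μ).real {x | t < ⨆ i, x i} = 1 - μ.real (Iic t) ^ Fintype.card ι := by
  have hset : {x : ι → ℝ | t < ⨆ i, x i} = (univ.pi fun _ => Iic t)ᶜ := by
    ext x
    simp only [mem_ofPred_eq, mem_compl_iff, mem_univ_pi, mem_Iic]
    rw [← not_le, ciSup_le_iff (finite_range x).bddAbove]
  rw [hset, probReal_compl_eq_one_sub (.univ_pi fun _ => measurableSet_Iic), measureReal_def,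
    Measure.pi_pi, ENNReal.toReal_prod, Finset.prod_const, Finset.card_univ, measureReal_def]

lemma real_pi_iInf_lt (t : ℝ) :
    (Measure.pi fun _ : ι => μ).real {x | ⨅ i, x i < t} = 1 - μ.real (Ici t) ^ Fintype.card ι := by
  have hset : {x : ι → ℝ | ⨅ i, x i < t} = (univ.pi fun _ => Ici t)ᶜ := by
    ext x
    simp only [mem_ofPred_eq, mem_compl_iff, mem_univ_pi, mem_Ici]
    rw [← not_le, le_ciInf_iff (finite_range x).bddBelow]
  rw [hset, probReal_compl_eq_one_sub (.univ_pi fun _ => measurableSet_Ici), measureReal_def,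
    Measure.pi_pi, ENNReal.toReal_prod, Finset.prod_const, Finset.card_univ, measureReal_def]

end OrderStatistics

lemma integral_Ioi_one_sub_min_div_pow {L : ℝ} (hL : 0 < L) (n : ℕ) :
    ∫ t in Ioi 0, (1 - (min t L / L) ^ n) = n / (n + 1) * L := by
  have hsupp : EqOn (fun t => 1 - (min t L / L) ^ n)
      ((Ioc 0 L).indicator fun t => 1 - (t / L) ^ n) (Ioi 0) := by
    intro t ht
    by_cases htL : t ≤ L
    · simp [indicator_of_mem (mem_Ioc.2 ⟨ht, htL⟩), min_eq_left htL]
    · simp [indicator_of_notMem (fun h => htL (mem_Ioc.1 h).2), min_eq_right (not_le.1 htL).le,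
        hL.ne']
  have hpow : IntervalIntegrable (fun t => (t / L) ^ n) volume 0 L :=
    (continuous_id.div_const L |>.pow n).intervalIntegrable 0 L
  rw [setIntegral_congr_fun measurableSet_Ioi hsupp, setIntegral_indicator measurableSet_Ioc,
    inter_eq_self_of_subset_right Ioc_subset_Ioi_self, ← intervalIntegral.integral_of_le hL.le,
    intervalIntegral.integral_sub intervalIntegrable_const hpow]
  simp_rw [div_pow]
  rw [intervalIntegral.integral_div, integral_pow, intervalIntegral.integral_const,
    zero_pow n.succ_ne_zero]
  field_simp
  ring

section Range

variable {ι : Type*} [Fintype ι] {a b : ℝ}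

lemma ae_forall_mem_Icc_pi_uniformIcc :
    ∀ᵐ x ∂(Measure.pi fun _ : ι => uniformIcc a b), ∀ i, x i ∈ Icc a b :=
  ae_all_iff.2 fun _ => Measure.tendsto_eval_ae_ae.eventually uniformIcc.ae_mem_Icc

variable [Nonempty ι]

lemma ae_iSup_mem_Icc_pi_uniformIcc :
    ∀ᵐ x ∂(Measure.pi fun _ : ι => uniformIcc a b), ⨆ i, x i ∈ Icc a b := by
  filter_upwards [ae_forall_mem_Icc_pi_uniformIcc] with x hx
  obtain ⟨j, hj⟩ := exists_eq_ciSup_of_finite (f := x)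
  exact hj ▸ hx j

lemma ae_iInf_mem_Icc_pi_uniformIcc :
    ∀ᵐ x ∂(Measure.pi fun _ : ι => uniformIcc a b), ⨅ i, x i ∈ Icc a b := by
  filter_upwards [ae_forall_mem_Icc_pi_uniformIcc] with x hx
  obtain ⟨j, hj⟩ := exists_eq_ciInf_of_finite (f := x)
  exact hj ▸ hx j

lemma integrable_iSup_pi_uniformIcc :
    Integrable (fun x : ι → ℝ => ⨆ i, x i) (Measure.pi fun _ : ι => uniformIcc a b) :=
  .of_mem_Icc a b (by fun_prop) ae_iSup_mem_Icc_pi_uniformIcc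

lemma integrable_iInf_pi_uniformIcc :
    Integrable (fun x : ι → ℝ => ⨅ i, x i) (Measure.pi fun _ : ι => uniformIcc a b) :=
  .of_mem_Icc a b (by fun_prop) ae_iInf_mem_Icc_pi_uniformIcc

lemma integral_iSup_sub_pi_uniformIcc (hab : a < b) :
    ∫ x, ((⨆ i, x i) - a) ∂(Measure.pi fun _ : ι => uniformIcc a b) =
      Fintype.card ι / (Fintype.card ι + 1) * (b - a) := by
  have := uniformIcc.isProbabilityMeasure hab
  have hint : Integrable (fun x : ι → ℝ => (⨆ i, x i) - a) (Measure.pi fun _ => uniformIcc a b) :=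
    (integrable_iSup_pi_uniformIcc).sub (integrable_const a)
  rw [hint.integral_eq_integral_meas_lt,
    ← integral_Ioi_one_sub_min_div_pow (sub_pos.2 hab)]
  · refine setIntegral_congr_fun measurableSet_Ioi fun t ht => ?_
    simp only [lt_sub_iff_add_lt']
    rw [real_pi_lt_iSup, uniformIcc.real_Iic hab.le (by linarith [mem_Ioi.1 ht]),
      ← min_sub_sub_right, add_sub_cancel_left]
  · filter_upwards [ae_iSup_mem_Icc_pi_uniformIcc] with x hx
    exact sub_nonneg.2 hx.1

lemma integral_sub_iInf_pi_uniformIcc (hab : a < b) :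
    ∫ x, (b - ⨅ i, x i) ∂(Measure.pi fun _ : ι => uniformIcc a b) =
      Fintype.card ι / (Fintype.card ι + 1) * (b - a) := by
  have := uniformIcc.isProbabilityMeasure hab
  have hint : Integrable (fun x : ι → ℝ => b - ⨅ i, x i) (Measure.pi fun _ => uniformIcc a b) :=
    (integrable_const b).sub (integrable_iInf_pi_uniformIcc)
  rw [hint.integral_eq_integral_meas_lt,
    ← integral_Ioi_one_sub_min_div_pow (sub_pos.2 hab)]
  · refine setIntegral_congr_fun measurableSet_Ioi fun t ht => ?_
    simp only [lt_sub_comm (a := t)]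
    rw [real_pi_iInf_lt, uniformIcc.real_Ici hab.le (by linarith [mem_Ioi.1 ht]),
      ← min_sub_sub_left, sub_sub_cancel]
  · filter_upwards [ae_iInf_mem_Icc_pi_uniformIcc] with x hx
    exact sub_nonneg.2 hx.2

lemma integral_iSup_sub_iInf_pi_uniformIcc (hab : a < b) :
    ∫ x, ((⨆ i, x i) - ⨅ i, x i) ∂(Measure.pi fun _ : ι => uniformIcc a b) =
      (Fintype.card ι - 1) / (Fintype.card ι + 1) * (b - a) := by
  have := uniformIcc.isProbabilityMeasure hab
  have hmax := integral_iSup_sub_pi_uniformIcc (ι := ι) hab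
  have hmin := integral_sub_iInf_pi_uniformIcc (ι := ι) hab
  rw [integral_sub (integrable_iSup_pi_uniformIcc) (integrable_const a)] at hmax
  rw [integral_sub (integrable_const b) (integrable_iInf_pi_uniformIcc)] at hmin
  rw [integral_sub (integrable_iSup_pi_uniformIcc) (integrable_iInf_pi_uniformIcc)]
  simp only [integral_const, probReal_univ, one_smul] at hmax hmin
  field_simp at hmax hmin ⊢
  linear_combination hmax + hmin

end Range

/-- The expected range of `n` i.i.d. uniform random variables on `[a,b]` equals
`((n-1)/(n+1)) * (b-a)`. -/
theorem expected_range_uniform (a b : ℝ) (hab : a < b) (n : ℕ) (hn : 1 ≤ n) :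
    ∫ x : Fin n → ℝ,
        ((⨆ i, x i) - ⨅ i, x i)
        ∂(Measure.pi fun _ : Fin n =>
            (ENNReal.ofReal (b - a))⁻¹ • volume.restrict (Set.Icc a b)) =
      ((n : ℝ) - 1) / ((n : ℝ) + 1) * (b - a) := by
  have : Nonempty (Fin n) := ⟨⟨0, hn⟩⟩
  change ∫ x, _ ∂(Measure.pi fun _ : Fin n => uniformIcc a b) = _
  simpa using integral_iSup_sub_iInf_pi_uniformIcc (ι := Fin n) hab
end

section
/- Let r > 0 and let C ⊆ ℝ^d be a compact r-convex set. Then C fulfills the outside rolling ball condition: for every point y on the topological boundary ∂C of C there exists x ∈ ℝ^d with dist(x,y) = r (so that y lies on the boundary of the closed ball B(x,r)) and B∘(x,r) ∩ C = ∅. -/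
/-! Every boundary point `y` is a limit of points outside `C`, each of which lies in an open
`r`-ball disjoint from `C`. The centres of such balls form a closed set, so in a proper space
some centre `x` has `dist x y ≤ r`; since `y ∈ C` and `ball x r` misses `C`, in fact
`dist x y = r`. -/

/-- A set `C ⊆ ℝ^d` is `r`-convex if it is the intersection of the complements of all
open Euclidean balls of radius `r` that are disjoint from `C`. -/
def RConvex {d : ℕ} (r : ℝ) (C : Set (EuclideanSpace ℝ (Fin d))) : Prop :=
  C = ⋂ x ∈ {x : EuclideanSpace ℝ (Fin d) | Metric.ball x r ∩ C = ∅}, (Metric.ball x r)ᶜ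

open Metric Set

section MetricSpace

variable {α : Type*} [PseudoMetricSpace α]

theorem le_dist_of_ball_inter_eq_empty {C : Set α} {x c : α} {r : ℝ}
    (hx : ball x r ∩ C = ∅) (hc : c ∈ C) : r ≤ dist c x :=
  not_lt.1 fun h => (eq_empty_iff_forall_notMem.1 hx) c ⟨h, hc⟩

theorem isClosed_setOf_ball_inter_eq_empty (C : Set α) (r : ℝ) :
    IsClosed {x : α | ball x r ∩ C = ∅} := by
  have hset : {x : α | ball x r ∩ C = ∅} = ⋂ c ∈ C, {x | r ≤ dist c x} := by
    ext x
    simp only [mem_ofPred_eq, mem_iInter, eq_empty_iff_forall_notMem, mem_inter_iff, mem_ball,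
      not_and]
    exact ⟨fun h c hc => not_lt.1 fun hlt => h c hlt hc,
      fun h c hlt hc => (h c hc).not_gt hlt⟩
  rw [hset]
  exact isClosed_biInter fun c _ =>
    isClosed_le continuous_const (continuous_const.dist continuous_id)

theorem exists_mem_dist_le_of_mem_closure [ProperSpace α] {F U : Set α} {r : ℝ}
    (hF : IsClosed F) (hU : ∀ z ∈ U, ∃ x ∈ F, dist z x < r) {y : α} (hy : y ∈ closure U) :
    ∃ x ∈ F, dist y x ≤ r := by
  obtain ⟨z, hz⟩ := closure_nonempty_iff.1 ⟨y, hy⟩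
  obtain ⟨x₀, hx₀F, -⟩ := hU z hz
  have hU_sub : U ⊆ {z | infDist z F ≤ r} := fun z hz =>
    let ⟨x, hxF, hzx⟩ := hU z hz
    (infDist_le_dist_of_mem hxF).trans hzx.le
  have hy_le : infDist y F ≤ r :=
    closure_minimal hU_sub (isClosed_le (continuous_infDist_pt F) continuous_const) hy
  obtain ⟨x, hxF, hx⟩ := hF.exists_infDist_eq_dist ⟨x₀, hx₀F⟩ y
  exact ⟨x, hxF, hx ▸ hy_le⟩

end MetricSpace

namespace RConvex

variable {d : ℕ} {r : ℝ} {C : Set (EuclideanSpace ℝ (Fin d))}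

theorem isClosed (hC : RConvex r C) : IsClosed C := by
  rw [hC]
  exact isClosed_biInter fun x _ => isOpen_ball.isClosed_compl

theorem exists_ball_inter_eq_empty_of_notMem (hC : RConvex r C)
    {z : EuclideanSpace ℝ (Fin d)} (hz : z ∉ C) :
    ∃ x ∈ {x | ball x r ∩ C = ∅}, dist z x < r := by
  rw [hC] at hz
  simpa only [mem_iInter, mem_compl_iff, mem_ball, not_forall, not_not, exists_prop] using hz

end RConvex

theorem rConvex_outside_rolling_ball_general {d : ℕ} (r : ℝ)
    (C : Set (EuclideanSpace ℝ (Fin d))) (hC : RConvex r C)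
    (y : EuclideanSpace ℝ (Fin d)) (hy : y ∈ frontier C) :
    ∃ x : EuclideanSpace ℝ (Fin d), dist x y = r ∧ Metric.ball x r ∩ C = ∅ := by
  have hyC : y ∈ C := hC.isClosed.frontier_subset hy
  have hy_closure : y ∈ closure Cᶜ := by
    rw [closure_compl]
    exact hy.2
  obtain ⟨x, hx, hxy⟩ := exists_mem_dist_le_of_mem_closure
    (isClosed_setOf_ball_inter_eq_empty C r)
    (fun z hz => hC.exists_ball_inter_eq_empty_of_notMem hz) hy_closure
  refine ⟨x, ?_, hx⟩
  rw [dist_comm]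
  exact le_antisymm hxy (le_dist_of_ball_inter_eq_empty hx hyC)

/-- A compact `r`-convex set fulfills the outside rolling ball condition: every boundary
point `y ∈ ∂C` lies on the boundary of a closed ball `B(x,r)` whose open interior is
disjoint from `C`. -/
theorem rConvex_outside_rolling_ball {d : ℕ} (r : ℝ) (hr : 0 < r)
    (C : Set (EuclideanSpace ℝ (Fin d))) (hcomp : IsCompact C) (hC : RConvex r C)
    (y : EuclideanSpace ℝ (Fin d)) (hy : y ∈ frontier C) :
    ∃ x : EuclideanSpace ℝ (Fin d), dist x y = r ∧ Metric.ball x r ∩ C = ∅ :=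
  rConvex_outside_rolling_ball_general r C hC y hy
end
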